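/- arXiv:2501.14255 — 2 statements merged into one kernel-verified Lean document; each statement's English description precedes it below -/
import Mathlib

section
/- Let (Ω, ℱ, P) be a probability space, and suppose {ℱ_s : s ∈ ℝ₊^N} and {𝒢_u : u ∈ ℝ₊^n} are two commuting filtrations (with respect to partial orders ⪯₁ on ℝ₊^N and the coordinatewise order ⪯ on ℝ₊^n respectively) such that the σ-algebras ℱ_∞ = σ(⋃_s ℱ_s) and 𝒢_∞ = σ(⋃_u 𝒢_u) are independent. Then the filtration ℋ_{(s,u)} = ℱ_s ∨ 𝒢_u, indexed by ℝ₊^N × ℝ₊^n with the product order (s,u) ⪯ (t,v) iff s ⪯₁ t and u ⪯ v, is commuting: for every bounded ℋ_{(t,v)}-measurable random variable Y, E[Y | ℋ_{(s,u)}] = E[Y | ℋ_{(s ∧₁ t, u ∧ v)}]. -/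
open MeasureTheory Filter
open scoped ENNReal NNReal Topology

private lemma habs_ind {Ω : Type*} (S : Set Ω) (ω : Ω) :
    |S.indicator (fun _ => (1 : ℝ)) ω| ≤ 1 := by
  by_cases h : ω ∈ S <;> simp [Set.indicator_apply, h]

private lemma simpleFunc_sm {Ω : Type*} {mt : MeasurableSpace Ω} (f : @SimpleFunc Ω mt ℝ) :
    StronglyMeasurable[mt] (⇑f) := f.stronglyMeasurable

private lemma simpleFunc_int {Ω : Type*} [m0 : MeasurableSpace Ω]
    (μ : Measure Ω) [IsFiniteMeasure μ] {mt : MeasurableSpace Ω}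
    (hle : mt ≤ m0) (f : @SimpleFunc Ω mt ℝ) : Integrable (⇑f) μ := by
  obtain ⟨C, hC⟩ := f.exists_forall_norm_le
  exact Integrable.mono' (integrable_const C)
    ((simpleFunc_sm f).mono hle).aestronglyMeasurable (Filter.Eventually.of_forall hC)

/-- Uniqueness of limits: if a sequence has a.e. equal conditional expectations with respect to
two σ-algebras and converges dominatedly, then the conditional expectations of the limit agree. -/
private lemma condexp_unique_two {α : Type*} [m0 : MeasurableSpace α] {μ : Measure α}
    [IsFiniteMeasure μ] {m1 m2 : MeasurableSpace α} (hm1 : m1 ≤ m0) (hm2 : m2 ≤ m0)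
    (fs : ℕ → α → ℝ) (f : α → ℝ) (bound : α → ℝ)
    (hfs_meas : ∀ n, AEStronglyMeasurable[m0] (fs n) μ) (h_int_bound : Integrable bound μ)
    (hfs_bound : ∀ n, ∀ᵐ x ∂μ, ‖fs n x‖ ≤ bound x)
    (hfs : ∀ᵐ x ∂μ, Tendsto (fun n => fs n x) atTop (𝓝 (f x)))
    (heq : ∀ n, μ[fs n|m1] =ᵐ[μ] μ[fs n|m2]) :
    μ[f|m1] =ᵐ[μ] μ[f|m2] := by
  refine (condExp_ae_eq_condExpL1 hm1 f).trans
    (Filter.EventuallyEq.trans ?_ (condExp_ae_eq_condExpL1 hm2 f).symm)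
  rw [← Lp.ext_iff]
  have h1 := tendsto_condExpL1_of_dominated_convergence hm1 bound hfs_meas h_int_bound
    hfs_bound hfs
  have h2 := tendsto_condExpL1_of_dominated_convergence hm2 bound hfs_meas h_int_bound
    hfs_bound hfs
  refine tendsto_nhds_unique_of_eventuallyEq h1 h2 (Eventually.of_forall fun n => ?_)
  rw [Lp.ext_iff]
  exact (condExp_ae_eq_condExpL1 hm1 (fs n)).symm.trans
    ((heq n).trans (condExp_ae_eq_condExpL1 hm2 (fs n)))

/-- Factorization of the conditional expectation of a product of indicators over a join of
σ-algebras, when the two generating families are independent. -/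
private lemma aux_factor {Ω : Type*} {MF MG mF mG : MeasurableSpace Ω}
    [m0 : MeasurableSpace Ω] (μ : Measure Ω) [IsProbabilityMeasure μ]
    (hFM : mF ≤ MF) (hGM : mG ≤ MG) (hMF : MF ≤ m0) (hMG : MG ≤ m0)
    (hindep : ProbabilityTheory.Indep MF MG μ) {A B : Set Ω}
    (hA : MeasurableSet[MF] A) (hB : MeasurableSet[MG] B) :
    μ[(A ∩ B).indicator (fun _ => (1:ℝ))|mF ⊔ mG] =ᵐ[μ]
      fun ω => (μ[A.indicator (fun _ => (1:ℝ))|mF]) ω * (μ[B.indicator (fun _ => (1:ℝ))|mG]) ω := by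
  have hmF : mF ≤ m0 := hFM.trans hMF
  have hmG : mG ≤ m0 := hGM.trans hMG
  have hm : mF ⊔ mG ≤ m0 := sup_le hmF hmG
  have hA0 : MeasurableSet[m0] A := hMF A hA
  have hB0 : MeasurableSet[m0] B := hMG B hB
  have hfint : Integrable ((A ∩ B).indicator fun _ => (1:ℝ)) μ :=
    (integrable_const (1:ℝ)).indicator (hA0.inter hB0)
  have hAint : Integrable (A.indicator fun _ => (1:ℝ)) μ :=
    (integrable_const (1:ℝ)).indicator hA0
  have hBint : Integrable (B.indicator fun _ => (1:ℝ)) μ :=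
    (integrable_const (1:ℝ)).indicator hB0
  have hcFbdd : ∀ᵐ ω ∂μ, |(μ[A.indicator (fun _ => (1:ℝ))|mF]) ω| ≤ ((1 : ℝ≥0) : ℝ) :=
    ae_bdd_condExp_of_ae_bdd (Eventually.of_forall fun ω => by simpa using habs_ind A ω)
  have hgint : Integrable (fun ω =>
      (μ[A.indicator (fun _ => (1:ℝ))|mF]) ω * (μ[B.indicator (fun _ => (1:ℝ))|mG]) ω) μ := by
    refine Integrable.bdd_mul (c := 1) integrable_condExp
      ((stronglyMeasurable_condExp.mono hmF).aestronglyMeasurable) ?_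
    filter_upwards [hcFbdd] with ω hω using by simpa [Real.norm_eq_abs] using hω
  -- key computation on rectangles
  have key : ∀ A' B', MeasurableSet[mF] A' → MeasurableSet[mG] B' →
      ∫ x in A' ∩ B',
        (μ[A.indicator (fun _ => (1:ℝ))|mF]) x * (μ[B.indicator (fun _ => (1:ℝ))|mG]) x ∂μ
      = ∫ x in A' ∩ B', (A ∩ B).indicator (fun _ => (1:ℝ)) x ∂μ := by
    intro A' B' hA' hB'
    have hA'0 : MeasurableSet[m0] A' := hmF A' hA'
    have hB'0 : MeasurableSet[m0] B' := hmG B' hB'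
    have hRHS : ∫ x in A' ∩ B', (A ∩ B).indicator (fun _ => (1:ℝ)) x ∂μ
        = (μ (A' ∩ A)).toReal * (μ (B' ∩ B)).toReal := by
      rw [setIntegral_indicator (hA0.inter hB0), setIntegral_const, smul_eq_mul, mul_one]
      have hset : A' ∩ B' ∩ (A ∩ B) = (A' ∩ A) ∩ (B' ∩ B) := by
        ext x; simp only [Set.mem_inter_iff]; tauto
      rw [hset, measureReal_def, (ProbabilityTheory.Indep_iff MF MG μ).1 hindep _ _
        ((hFM _ hA').inter hA) ((hGM _ hB').inter hB), ENNReal.toReal_mul]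
    set X := A'.indicator (μ[A.indicator (fun _ => (1:ℝ))|mF]) with hX
    set Yg := B'.indicator (μ[B.indicator (fun _ => (1:ℝ))|mG]) with hYg
    have hXmeas : Measurable[MF] X :=
      Measurable.indicator ((stronglyMeasurable_condExp.mono hFM).measurable) (hFM _ hA')
    have hYmeas : Measurable[MG] Yg :=
      Measurable.indicator ((stronglyMeasurable_condExp.mono hGM).measurable) (hGM _ hB')
    have hXY : ProbabilityTheory.IndepFun X Yg μ := by
      rw [ProbabilityTheory.indepFun_iff_measure_inter_preimage_eq_mul]
      intro s' t' hs' ht'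
      exact (ProbabilityTheory.Indep_iff MF MG μ).1 hindep _ _ (hXmeas hs') (hYmeas ht')
    have hXint : Integrable X μ := integrable_condExp.indicator hA'0
    have hYint : Integrable Yg μ := integrable_condExp.indicator hB'0
    have hLHS : ∫ x in A' ∩ B',
        (μ[A.indicator (fun _ => (1:ℝ))|mF]) x * (μ[B.indicator (fun _ => (1:ℝ))|mG]) x ∂μ
        = ∫ x, X x * Yg x ∂μ := by
      rw [← integral_indicator (hA'0.inter hB'0)]
      congr 1; funext x
      by_cases hx1 : x ∈ A' <;> by_cases hx2 : x ∈ B' <;>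
        simp [hX, hYg, Set.indicator_apply, hx1, hx2]
    have hIX : ∫ x, X x ∂μ = (μ (A' ∩ A)).toReal := by
      rw [hX, integral_indicator hA'0, setIntegral_condExp hmF hAint hA',
        setIntegral_indicator hA0, setIntegral_const, smul_eq_mul, mul_one, measureReal_def]
    have hIY : ∫ x, Yg x ∂μ = (μ (B' ∩ B)).toReal := by
      rw [hYg, integral_indicator hB'0, setIntegral_condExp hmG hBint hB',
        setIntegral_indicator hB0, setIntegral_const, smul_eq_mul, mul_one, measureReal_def]
    calc ∫ x in A' ∩ B',
        (μ[A.indicator (fun _ => (1:ℝ))|mF]) x * (μ[B.indicator (fun _ => (1:ℝ))|mG]) x ∂μ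
        = ∫ x, (X * Yg) x ∂μ := hLHS
      _ = (∫ x, X x ∂μ) * ∫ x, Yg x ∂μ := ProbabilityTheory.IndepFun.integral_mul_eq_mul_integral hXY
          hXint.aestronglyMeasurable hYint.aestronglyMeasurable
      _ = ∫ x in A' ∩ B', (A ∩ B).indicator (fun _ => (1:ℝ)) x ∂μ := by
          rw [hIX, hIY, hRHS]
  have htotal : ∫ x, (μ[A.indicator (fun _ => (1:ℝ))|mF]) x
        * (μ[B.indicator (fun _ => (1:ℝ))|mG]) x ∂μ
      = ∫ x, (A ∩ B).indicator (fun _ => (1:ℝ)) x ∂μ := by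
    have h := key Set.univ Set.univ MeasurableSet.univ MeasurableSet.univ
    simpa [Set.univ_inter, Measure.restrict_univ] using h
  -- π-system argument for all sets in the join
  set π : Set (Set Ω) :=
    {U | ∃ A' B', MeasurableSet[mF] A' ∧ MeasurableSet[mG] B' ∧ U = A' ∩ B'} with hπ
  have h_eq : mF ⊔ mG = MeasurableSpace.generateFrom π := by
    refine le_antisymm (sup_le ?_ ?_) (MeasurableSpace.generateFrom_le ?_)
    · exact fun U hU => MeasurableSpace.measurableSet_generateFrom
        ⟨U, Set.univ, hU, MeasurableSet.univ, (Set.inter_univ U).symm⟩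
    · exact fun U hU => MeasurableSpace.measurableSet_generateFrom
        ⟨Set.univ, U, MeasurableSet.univ, hU, (Set.univ_inter U).symm⟩
    · rintro U ⟨A', B', hA', hB', rfl⟩
      exact ((le_sup_left : mF ≤ mF ⊔ mG) _ hA').inter ((le_sup_right : mG ≤ mF ⊔ mG) _ hB')
  have h_pi : IsPiSystem π := by
    rintro U ⟨A1, B1, h1, h2, rfl⟩ V ⟨A2, B2, h3, h4, rfl⟩ -
    refine ⟨A1 ∩ A2, B1 ∩ B2, h1.inter h3, h2.inter h4, ?_⟩
    ext x; simp only [Set.mem_inter_iff]; tauto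
  have hg_eq : ∀ U, MeasurableSet[mF ⊔ mG] U →
      ∫ x in U, (μ[A.indicator (fun _ => (1:ℝ))|mF]) x
          * (μ[B.indicator (fun _ => (1:ℝ))|mG]) x ∂μ
        = ∫ x in U, (A ∩ B).indicator (fun _ => (1:ℝ)) x ∂μ := by
    intro U hU
    refine MeasurableSpace.induction_on_inter (m := mF ⊔ mG)
      (C := fun U _ => ∫ x in U, (μ[A.indicator (fun _ => (1:ℝ))|mF]) x
          * (μ[B.indicator (fun _ => (1:ℝ))|mG]) x ∂μ
        = ∫ x in U, (A ∩ B).indicator (fun _ => (1:ℝ)) x ∂μ)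
      h_eq h_pi ?_ ?_ ?_ ?_ U hU
    · simp
    · rintro V ⟨A', B', hA', hB', rfl⟩
      exact key A' B' hA' hB'
    · intro V hV hC
      rw [setIntegral_compl (hm V hV) hgint, setIntegral_compl (hm V hV) hfint, htotal, hC]
    · intro f' hd hmeas hC
      rw [integral_iUnion (fun i => hm _ (hmeas i)) hd hgint.integrableOn,
        integral_iUnion (fun i => hm _ (hmeas i)) hd hfint.integrableOn]
      exact tsum_congr hC
  refine (ae_eq_condExp_of_forall_setIntegral_eq hm hfint
    (fun s _ _ => hgint.integrableOn) (fun s hs _ => hg_eq s hs) ?_).symm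
  exact StronglyMeasurable.aestronglyMeasurable ((stronglyMeasurable_condExp.mono (le_sup_left : mF ≤ mF ⊔ mG)).mul
    (stronglyMeasurable_condExp.mono (le_sup_right : mG ≤ mF ⊔ mG)))

/-- If `{ℱ_s : s ∈ ℝ₊^N}` and `{𝒢_u : u ∈ ℝ₊^n}` are commuting filtrations (with respect
to a partial order `⪯₁` with meets `inf1` on `ℝ₊^N`, and the coordinatewise order on
`ℝ₊^n`) whose terminal σ-algebras are independent, then the product-indexed filtration
`ℋ_{(s,u)} = ℱ_s ∨ 𝒢_u` is commuting. -/
theorem stmt15 {Ω : Type*} [m0 : MeasurableSpace Ω] (μ : Measure Ω)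
    [IsProbabilityMeasure μ] (N n : ℕ)
    (F : (Fin N → ℝ≥0) → MeasurableSpace Ω) (G : (Fin n → ℝ≥0) → MeasurableSpace Ω)
    (le1 : (Fin N → ℝ≥0) → (Fin N → ℝ≥0) → Prop)
    (inf1 : (Fin N → ℝ≥0) → (Fin N → ℝ≥0) → (Fin N → ℝ≥0))
    (hle_refl : ∀ s, le1 s s)
    (hle_antisymm : ∀ s t, le1 s t → le1 t s → s = t)
    (hle_trans : ∀ s t u, le1 s t → le1 t u → le1 s u)
    (hinf_le_left : ∀ s t, le1 (inf1 s t) s)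
    (hinf_le_right : ∀ s t, le1 (inf1 s t) t)
    (hinf_glb : ∀ s t r, le1 r s → le1 r t → le1 r (inf1 s t))
    (hF0 : ∀ s, F s ≤ m0) (hG0 : ∀ u, G u ≤ m0)
    (hFmono : ∀ s t, le1 s t → F s ≤ F t)
    (hGmono : ∀ u v : Fin n → ℝ≥0, u ≤ v → G u ≤ G v)
    (hFcomm : ∀ s t (Y : Ω → ℝ), StronglyMeasurable[F t] Y → (∃ C, ∀ ω, |Y ω| ≤ C) →
      μ[Y|F s] =ᵐ[μ] μ[Y|F (inf1 s t)])
    (hGcomm : ∀ u v (Y : Ω → ℝ), StronglyMeasurable[G v] Y → (∃ C, ∀ ω, |Y ω| ≤ C) →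
      μ[Y|G u] =ᵐ[μ] μ[Y|G (u ⊓ v)])
    (hindep : ProbabilityTheory.Indep (⨆ s, F s) (⨆ u, G u) μ) :
    ∀ s t u v (Y : Ω → ℝ), StronglyMeasurable[F t ⊔ G v] Y → (∃ C, ∀ ω, |Y ω| ≤ C) →
      μ[Y|F s ⊔ G u] =ᵐ[μ] μ[Y|F (inf1 s t) ⊔ G (u ⊓ v)] := by
  intro s t u v Y hYm hYbdd
  have hFtop : ∀ x, F x ≤ ⨆ y, F y := fun x => le_iSup F x
  have hGtop : ∀ x, G x ≤ ⨆ y, G y := fun x => le_iSup G x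
  have hFtop0 : (⨆ y, F y) ≤ m0 := iSup_le hF0
  have hGtop0 : (⨆ y, G y) ≤ m0 := iSup_le hG0
  have hm1 : F s ⊔ G u ≤ m0 := sup_le (hF0 s) (hG0 u)
  have hm2 : F (inf1 s t) ⊔ G (u ⊓ v) ≤ m0 := sup_le (hF0 _) (hG0 _)
  have hmtv : F t ⊔ G v ≤ m0 := sup_le (hF0 t) (hG0 v)
  -- Step 1: indicators of sets in the π-system of rectangles
  have hrect : ∀ A B, MeasurableSet[F t] A → MeasurableSet[G v] B →
      μ[(A ∩ B).indicator (fun _ => (1:ℝ))|F s ⊔ G u]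
        =ᵐ[μ] μ[(A ∩ B).indicator (fun _ => (1:ℝ))|F (inf1 s t) ⊔ G (u ⊓ v)] := by
    intro A B hA hB
    have h1 := aux_factor μ (hFtop s) (hGtop u) hFtop0 hGtop0 hindep
      (hFtop t A hA) (hGtop v B hB)
    have h2 := aux_factor μ (hFtop (inf1 s t)) (hGtop (u ⊓ v)) hFtop0 hGtop0 hindep
      (hFtop t A hA) (hGtop v B hB)
    have hF' := hFcomm s t (A.indicator fun _ => (1:ℝ))
      (stronglyMeasurable_const.indicator hA) ⟨1, habs_ind A⟩
    have hG' := hGcomm u v (B.indicator fun _ => (1:ℝ))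
      (stronglyMeasurable_const.indicator hB) ⟨1, habs_ind B⟩
    refine h1.trans (Filter.EventuallyEq.trans ?_ h2.symm)
    filter_upwards [hF', hG'] with ω hω1 hω2
    rw [hω1, hω2]
  -- Step 2: indicators of all measurable sets in F t ⊔ G v
  have hsets : ∀ U, MeasurableSet[F t ⊔ G v] U →
      μ[U.indicator (fun _ => (1:ℝ))|F s ⊔ G u]
        =ᵐ[μ] μ[U.indicator (fun _ => (1:ℝ))|F (inf1 s t) ⊔ G (u ⊓ v)] := by
    set π : Set (Set Ω) :=
      {U | ∃ A B, MeasurableSet[F t] A ∧ MeasurableSet[G v] B ∧ U = A ∩ B} with hπ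
    have h_eq : F t ⊔ G v = MeasurableSpace.generateFrom π := by
      refine le_antisymm (sup_le ?_ ?_) (MeasurableSpace.generateFrom_le ?_)
      · exact fun U hU => MeasurableSpace.measurableSet_generateFrom
          ⟨U, Set.univ, hU, MeasurableSet.univ, (Set.inter_univ U).symm⟩
      · exact fun U hU => MeasurableSpace.measurableSet_generateFrom
          ⟨Set.univ, U, MeasurableSet.univ, hU, (Set.univ_inter U).symm⟩
      · rintro U ⟨A, B, hA, hB, rfl⟩
        exact ((le_sup_left : F t ≤ F t ⊔ G v) _ hA).inter
          ((le_sup_right : G v ≤ F t ⊔ G v) _ hB)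
    have h_pi : IsPiSystem π := by
      rintro U ⟨A1, B1, h1, h2, rfl⟩ V ⟨A2, B2, h3, h4, rfl⟩ -
      refine ⟨A1 ∩ A2, B1 ∩ B2, h1.inter h3, h2.inter h4, ?_⟩
      ext x; simp only [Set.mem_inter_iff]; tauto
    intro U hU
    refine MeasurableSpace.induction_on_inter (m := F t ⊔ G v)
      (C := fun U _ => μ[U.indicator (fun _ => (1:ℝ))|F s ⊔ G u]
        =ᵐ[μ] μ[U.indicator (fun _ => (1:ℝ))|F (inf1 s t) ⊔ G (u ⊓ v)])
      h_eq h_pi ?_ ?_ ?_ ?_ U hU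
    · have h0 : (∅ : Set Ω).indicator (fun _ => (1:ℝ)) = (0 : Ω → ℝ) := Set.indicator_empty _
      show μ[(∅ : Set Ω).indicator (fun _ => (1:ℝ))|F s ⊔ G u]
        =ᵐ[μ] μ[(∅ : Set Ω).indicator (fun _ => (1:ℝ))|F (inf1 s t) ⊔ G (u ⊓ v)]
      rw [h0, condExp_zero, condExp_zero]
    · rintro V ⟨A, B, hA, hB, rfl⟩
      exact hrect A B hA hB
    · -- complement
      intro V hV hC
      have hVc : Vᶜ.indicator (fun _ => (1:ℝ))
          = (fun _ => (1:ℝ)) - V.indicator (fun _ => (1:ℝ)) := by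
        funext ω
        by_cases h : ω ∈ V <;> simp [Set.indicator_apply, h]
      have hint : Integrable (V.indicator fun _ => (1:ℝ)) μ :=
        (integrable_const (1:ℝ)).indicator (hmtv V hV)
      rw [hVc]
      have e1 := condExp_sub (m := F s ⊔ G u) (μ := μ)
        (integrable_const (1:ℝ)) hint
      have e2 := condExp_sub (m := F (inf1 s t) ⊔ G (u ⊓ v)) (μ := μ)
        (integrable_const (1:ℝ)) hint
      refine e1.trans (Filter.EventuallyEq.trans ?_ e2.symm)
      filter_upwards [hC] with ω hω
      simp only [Pi.sub_apply, condExp_const hm1, condExp_const hm2, hω]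
    · -- countable disjoint union
      intro f' hd hmeas hC
      have hpartint : ∀ k : ℕ, Integrable ((f' k).indicator fun _ => (1:ℝ)) μ :=
        fun k => (integrable_const (1:ℝ)).indicator (hmtv _ (hmeas k))
      have hUmeas : ∀ k : ℕ, MeasurableSet (⋃ i ∈ Finset.range k, f' i) :=
        fun k => (Finset.range k).measurableSet_biUnion fun i _ => hmtv _ (hmeas i)
      have hpart : ∀ k : ℕ,
          μ[(⋃ i ∈ Finset.range k, f' i).indicator (fun _ => (1:ℝ))|F s ⊔ G u]
            =ᵐ[μ] μ[(⋃ i ∈ Finset.range k, f' i).indicator (fun _ => (1:ℝ))|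
                F (inf1 s t) ⊔ G (u ⊓ v)] := by
        intro k
        induction k with
        | zero =>
          have h0 : (⋃ i ∈ Finset.range 0, f' i).indicator (fun _ => (1:ℝ)) = (0 : Ω → ℝ) := by
            rw [show (⋃ i ∈ Finset.range 0, f' i) = (∅ : Set Ω) by simp]
            exact Set.indicator_empty _
          rw [h0, condExp_zero, condExp_zero]
        | succ k ih =>
          have hdisj2 : Disjoint (⋃ i ∈ Finset.range k, f' i) (f' k) := by
            rw [Set.disjoint_left]
            rintro x hx hxk
            rw [Set.mem_iUnion₂] at hx
            obtain ⟨i, hi, hxi⟩ := hx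
            exact Set.disjoint_left.1 (hd (Finset.mem_range.1 hi).ne) hxi hxk
          have hind : (⋃ i ∈ Finset.range (k+1), f' i).indicator (fun _ => (1:ℝ))
              = (⋃ i ∈ Finset.range k, f' i).indicator (fun _ => (1:ℝ))
                + (f' k).indicator (fun _ => (1:ℝ)) := by
            have hU : (⋃ i ∈ Finset.range (k+1), f' i)
                = (⋃ i ∈ Finset.range k, f' i) ∪ f' k := by
              simp [Finset.range_add_one, Set.biUnion_insert, Set.union_comm]
            funext ω
            simp only [Pi.add_apply]
            rw [hU]
            by_cases h1 : ω ∈ ⋃ i ∈ Finset.range k, f' i <;> by_cases h2 : ω ∈ f' k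
            · exact absurd h2 (Set.disjoint_left.1 hdisj2 h1)
            · rw [Set.indicator_of_mem (Set.mem_union_left _ h1), Set.indicator_of_mem h1,
                Set.indicator_of_notMem h2]; norm_num
            · rw [Set.indicator_of_mem (Set.mem_union_right _ h2), Set.indicator_of_notMem h1,
                Set.indicator_of_mem h2]; norm_num
            · rw [Set.indicator_of_notMem (fun hc => (hc.elim h1 h2 : False)),
                Set.indicator_of_notMem h1, Set.indicator_of_notMem h2]; norm_num
          rw [hind]
          have hUint : Integrable
              ((⋃ i ∈ Finset.range k, f' i).indicator fun _ => (1:ℝ)) μ :=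
            (integrable_const (1:ℝ)).indicator (hUmeas k)
          have e1 := condExp_add (m := F s ⊔ G u) (μ := μ) hUint (hpartint k)
          have e2 := condExp_add (m := F (inf1 s t) ⊔ G (u ⊓ v)) (μ := μ)
            hUint (hpartint k)
          refine e1.trans (Filter.EventuallyEq.trans ?_ e2.symm)
          filter_upwards [ih, hC k] with ω hω1 hω2
          simp only [Pi.add_apply, hω1, hω2]
      refine condexp_unique_two hm1 hm2
        (fun k => (⋃ i ∈ Finset.range k, f' i).indicator (fun _ => (1:ℝ)))
        ((⋃ i, f' i).indicator (fun _ => (1:ℝ))) (fun _ => (1:ℝ))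
        (fun k => ((stronglyMeasurable_const.indicator
            ((Finset.range k).measurableSet_biUnion fun i _ => hmeas i)).mono
            hmtv).aestronglyMeasurable)
        (integrable_const 1)
        (fun k => Eventually.of_forall fun ω => by
          simpa [Real.norm_eq_abs] using habs_ind (⋃ i ∈ Finset.range k, f' i) ω)
        (Eventually.of_forall fun ω => ?_) hpart
      by_cases hω : ω ∈ ⋃ i, f' i
      · obtain ⟨i₀, hi₀⟩ := Set.mem_iUnion.1 hω
        have hval : (⋃ i, f' i).indicator (fun _ => (1:ℝ)) ω = 1 :=
          Set.indicator_of_mem hω _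
        rw [hval]
        refine tendsto_atTop_of_eventually_const (i₀ := i₀ + 1) fun k hk => ?_
        refine Set.indicator_of_mem ?_ _
        exact Set.mem_biUnion (Finset.mem_range.2 (Nat.lt_of_lt_of_le (Nat.lt_succ_self i₀) hk))
          hi₀
      · have hval : (⋃ i, f' i).indicator (fun _ => (1:ℝ)) ω = 0 :=
          Set.indicator_of_notMem hω _
        rw [hval]
        have : ∀ k : ℕ, (⋃ i ∈ Finset.range k, f' i).indicator (fun _ => (1:ℝ)) ω = 0 := by
          intro k
          refine Set.indicator_of_notMem (fun hmem => ?_) _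
          rw [Set.mem_iUnion₂] at hmem
          obtain ⟨i, _, hxi⟩ := hmem
          exact hω (Set.mem_iUnion.2 ⟨i, hxi⟩)
        exact Tendsto.congr (fun k => (this k).symm) tendsto_const_nhds
  -- Step 3: simple functions measurable w.r.t. F t ⊔ G v
  have hsimple : ∀ φ : @SimpleFunc Ω (F t ⊔ G v) ℝ,
      μ[⇑φ|F s ⊔ G u] =ᵐ[μ] μ[⇑φ|F (inf1 s t) ⊔ G (u ⊓ v)] := by
    intro φ
    refine @SimpleFunc.induction Ω ℝ (F t ⊔ G v) _
      (fun ψ => μ[⇑ψ|F s ⊔ G u] =ᵐ[μ] μ[⇑ψ|F (inf1 s t) ⊔ G (u ⊓ v)]) ?_ ?_ φ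
    · intro c U hU
      have hcoe : ⇑(@SimpleFunc.piecewise Ω ℝ (F t ⊔ G v) U hU
            (@SimpleFunc.const Ω ℝ (F t ⊔ G v) c) (@SimpleFunc.const Ω ℝ (F t ⊔ G v) 0))
          = c • U.indicator (fun _ => (1:ℝ)) := by
        funext ω
        by_cases h : ω ∈ U <;>
          simp [SimpleFunc.piecewise_apply, h, Set.indicator_apply]
      rw [hcoe]
      have e1 := condExp_smul (μ := μ) (m := F s ⊔ G u) c (U.indicator (fun _ => (1:ℝ)))
      have e2 := condExp_smul (μ := μ) (m := F (inf1 s t) ⊔ G (u ⊓ v)) c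
        (U.indicator (fun _ => (1:ℝ)))
      refine e1.trans (Filter.EventuallyEq.trans ?_ e2.symm)
      filter_upwards [hsets U hU] with ω hω
      simp only [Pi.smul_apply, hω]
    · intro f g _ hf hg
      have hfint : Integrable (⇑f) μ := simpleFunc_int μ hmtv f
      have hgint : Integrable (⇑g) μ := simpleFunc_int μ hmtv g
      have hcoe : ⇑(f + g) = ⇑f + ⇑g := by
        funext ω; simp
      rw [hcoe]
      have e1 := condExp_add (m := F s ⊔ G u) (μ := μ) hfint hgint
      have e2 := condExp_add (m := F (inf1 s t) ⊔ G (u ⊓ v)) (μ := μ) hfint hgint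
      refine e1.trans (Filter.EventuallyEq.trans ?_ e2.symm)
      filter_upwards [hf, hg] with ω hω1 hω2
      simp only [Pi.add_apply, hω1, hω2]
  -- Step 4: approximate Y by bounded simple functions
  obtain ⟨C, hC⟩ := hYbdd
  have hC' : ∀ ω, ‖Y ω‖ ≤ max C 0 :=
    fun ω => le_trans (by simpa [Real.norm_eq_abs] using hC ω) (le_max_left C 0)
  refine condexp_unique_two hm1 hm2
    (fun k => hYm.approxBounded (max C 0) k) Y (fun _ => max C 0)
    (fun k => ((simpleFunc_sm (hYm.approxBounded (max C 0) k)).mono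
      hmtv).aestronglyMeasurable)
    (integrable_const _)
    (fun k => Eventually.of_forall fun ω =>
      hYm.norm_approxBounded_le (le_max_right C 0) k ω)
    (Eventually.of_forall fun ω => hYm.tendsto_approxBounded_of_norm_le (hC' ω))
    (fun k => hsimple _)
end

section
/- Fix 0 < a < b < ∞ and N ≥ 1. There exist constants c, c' with 0 < c < 1 < c' < ∞, depending only on a, b, N, such that for all s, t ∈ [a,b]^N: (i) 1 − ∏_{k=1}^N (min(s_k,t_k)/s_k) ≤ c'' ‖t − s‖^{1/2} for some c'' = c''(a,b,N) (in fact 1 − C_{s,t} ≤ c''‖t−s‖, which implies the ‖t−s‖^{1/2} bound since ‖t−s‖ is bounded); and (ii) writing σ_{s,t}² for the variance of one coordinate of the pinned sheet W_s(t) = W(t) − C_{s,t}W(s), one has c ‖t − s‖ ≤ σ_{s,t}² ≤ c' ‖t − s‖. -/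
lemma aux_one_sub_prod_le_sum {n : ℕ} (w : Fin n → ℝ) (h0 : ∀ k, 0 ≤ w k)
    (h1 : ∀ k, w k ≤ 1) : 1 - ∏ k, w k ≤ ∑ k, (1 - w k) := by
  induction n with
  | zero => simp
  | succ n ih =>
    rw [Fin.prod_univ_succ, Fin.sum_univ_succ]
    have h := ih (fun k => w k.succ) (fun k => h0 _) (fun k => h1 _)
    have hP0 : 0 ≤ ∏ k, w (Fin.succ k) := Finset.prod_nonneg fun k _ => h0 _
    have hP1 : ∏ k, w (Fin.succ k) ≤ 1 := Finset.prod_le_one (fun k _ => h0 _) (fun k _ => h1 _)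
    nlinarith [h0 0, h1 0]

lemma aux_prod_le {n : ℕ} (w : Fin n → ℝ) (h0 : ∀ k, 0 ≤ w k)
    (h1 : ∀ k, w k ≤ 1) (j : Fin n) : ∏ k, w k ≤ w j := by
  rw [← Finset.mul_prod_erase Finset.univ w (Finset.mem_univ j)]
  have h2 : ∏ k ∈ Finset.univ.erase j, w k ≤ 1 :=
    Finset.prod_le_one (fun k _ => h0 _) (fun k _ => h1 _)
  have h3 : 0 ≤ ∏ k ∈ Finset.univ.erase j, w k := Finset.prod_nonneg fun k _ => h0 _
  nlinarith [h0 j]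

lemma aux_sum_le (n : ℕ) (w : Fin n → ℝ) (h0 : ∀ k, 0 ≤ w k)
    (h1 : ∀ k, w k ≤ 1) : ∑ k, (1 - w k) ≤ n * (1 - ∏ k, w k) := by
  have : ∀ k ∈ Finset.univ, 1 - w k ≤ 1 - ∏ k, w k := fun k _ => by
    linarith [aux_prod_le w h0 h1 k]
  calc ∑ k, (1 - w k) ≤ Finset.univ.card • (1 - ∏ k, w k) :=
        Finset.sum_le_card_nsmul _ _ _ this
    _ = n * (1 - ∏ k, w k) := by simp [nsmul_eq_mul]

lemma aux_abs_le_norm {n : ℕ} (x : EuclideanSpace ℝ (Fin n)) (k : Fin n) :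
    |x k| ≤ ‖x‖ := by
  rw [EuclideanSpace.norm_eq]
  rw [← Real.sqrt_sq_eq_abs]
  apply Real.sqrt_le_sqrt
  have := Finset.single_le_sum (f := fun i => ‖x i‖ ^ 2)
    (fun i _ => sq_nonneg _) (Finset.mem_univ k)
  simpa [Real.norm_eq_abs, sq_abs] using this

lemma aux_norm_le_sum {n : ℕ} (x : EuclideanSpace ℝ (Fin n)) :
    ‖x‖ ≤ ∑ k, |x k| := by
  rw [EuclideanSpace.norm_eq]
  have h1 : ∀ i, |x i| ≤ ∑ k, |x k| := fun i =>
    Finset.single_le_sum (f := fun k => |x k|) (fun k _ => abs_nonneg _) (Finset.mem_univ i)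
  have h2 : ∑ i, ‖x i‖ ^ 2 ≤ (∑ k, |x k|) ^ 2 := by
    rw [sq, Finset.sum_mul]
    refine Finset.sum_le_sum fun i _ => ?_
    rw [Real.norm_eq_abs, sq]
    exact mul_le_mul_of_nonneg_left (h1 i) (abs_nonneg _)
  calc Real.sqrt (∑ i, ‖x i‖ ^ 2) ≤ Real.sqrt ((∑ k, |x k|) ^ 2) := Real.sqrt_le_sqrt h2
    _ = ∑ k, |x k| := Real.sqrt_sq (Finset.sum_nonneg fun k _ => abs_nonneg _)


/-- Estimates (3.8)–(3.9) of the paper: for `0 < a < b` there are constants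
`0 < c < 1 < c'` and `c'' > 0`, depending only on `a, b, N`, such that for all
`s, t ∈ [a,b]^N`, writing `C_{s,t} = ∏ min(s_k,t_k)/s_k` and
`σ_{s,t}² = ∏ t_k − C_{s,t}² ∏ s_k` (the variance of one coordinate of the pinned
Brownian sheet `W_s(t)`): `1 − C_{s,t} ≤ c'' ‖t−s‖^{1/2}` and
`c ‖t−s‖ ≤ σ_{s,t}² ≤ c' ‖t−s‖`. -/
theorem stmt19 (N : ℕ) (hN : 1 ≤ N) (a b : ℝ) (ha : 0 < a) (hab : a < b) :
    ∃ c c' c'' : ℝ, 0 < c ∧ c < 1 ∧ 1 < c' ∧ 0 < c'' ∧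
      ∀ s t : EuclideanSpace ℝ (Fin N),
        (∀ k, s k ∈ Set.Icc a b) → (∀ k, t k ∈ Set.Icc a b) →
        (1 - ∏ k, min (s k) (t k) / s k ≤ c'' * Real.sqrt ‖t - s‖) ∧
        (c * ‖t - s‖ ≤
          (∏ k, t k) - (∏ k, min (s k) (t k) / s k) ^ 2 * ∏ k, s k) ∧
        ((∏ k, t k) - (∏ k, min (s k) (t k) / s k) ^ 2 * ∏ k, s k ≤
          c' * ‖t - s‖) := by

  have hb : 0 < b := ha.trans hab
  have hN0 : (0:ℝ) < N := by exact_mod_cast hN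
  have haN : (0:ℝ) < a ^ N := pow_pos ha N
  have hbN : (0:ℝ) < b ^ N := pow_pos hb N
  refine ⟨min (a^N/(N*b)) (1/2), N*b^N/a + 2, (N/a) * Real.sqrt (N*(b-a)), ?_, ?_, ?_, ?_, ?_⟩
  · exact lt_min (div_pos haN (mul_pos hN0 hb)) (by norm_num)
  · exact lt_of_le_of_lt (min_le_right _ _) (by norm_num)
  · nlinarith [div_pos (mul_pos hN0 hbN) ha]
  · exact mul_pos (div_pos hN0 ha) (Real.sqrt_pos.mpr (mul_pos hN0 (by linarith)))
  intro s t hs ht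
  -- pointwise bounds
  have hs1 : ∀ k, a ≤ s k := fun k => (hs k).1
  have hs2 : ∀ k, s k ≤ b := fun k => (hs k).2
  have ht1 : ∀ k, a ≤ t k := fun k => (ht k).1
  have ht2 : ∀ k, t k ≤ b := fun k => (ht k).2
  have hs0 : ∀ k, 0 < s k := fun k => ha.trans_le (hs1 k)
  have ht0 : ∀ k, 0 < t k := fun k => ha.trans_le (ht1 k)
  set m : Fin N → ℝ := fun k => min (s k) (t k) with hm
  have hm1 : ∀ k, a ≤ m k := fun k => le_min (hs1 k) (ht1 k)
  have hm0 : ∀ k, 0 < m k := fun k => ha.trans_le (hm1 k)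
  have hms : ∀ k, m k ≤ s k := fun k => min_le_left _ _
  have hmt : ∀ k, m k ≤ t k := fun k => min_le_right _ _
  set C : ℝ := ∏ k, m k / s k with hC
  set D : ℝ := ∏ k, m k / t k with hD
  set T : ℝ := ∏ k, t k with hT
  set S : ℝ := ∏ k, s k with hS
  set M : ℝ := ∏ k, m k with hM
  set P : ℝ := ∑ k, (t k - m k) with hP
  set Q : ℝ := ∑ k, (s k - m k) with hQ
  set R : ℝ := ∑ k, |t k - s k| with hR
  set n : ℝ := ‖t - s‖ with hn
  -- basic facts
  have hws0 : ∀ k, 0 ≤ m k / s k := fun k => le_of_lt (div_pos (hm0 k) (hs0 k))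
  have hws1 : ∀ k, m k / s k ≤ 1 := fun k => (div_le_one (hs0 k)).mpr (hms k)
  have hwt0 : ∀ k, 0 ≤ m k / t k := fun k => le_of_lt (div_pos (hm0 k) (ht0 k))
  have hwt1 : ∀ k, m k / t k ≤ 1 := fun k => (div_le_one (ht0 k)).mpr (hmt k)
  have hC0 : 0 ≤ C := Finset.prod_nonneg fun k _ => hws0 k
  have hC1 : C ≤ 1 := Finset.prod_le_one (fun k _ => hws0 k) (fun k _ => hws1 k)
  have hD0 : 0 ≤ D := Finset.prod_nonneg fun k _ => hwt0 k
  have hD1 : D ≤ 1 := Finset.prod_le_one (fun k _ => hwt0 k) (fun k _ => hwt1 k)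
  have hP0 : 0 ≤ P := Finset.sum_nonneg fun k _ => by linarith [hmt k]
  have hQ0 : 0 ≤ Q := Finset.sum_nonneg fun k _ => by linarith [hms k]
  have hpow : ∀ x : ℝ, (∏ _k : Fin N, x) = x ^ N := fun x => by
    rw [Finset.prod_const, Finset.card_univ, Fintype.card_fin]
  have hT1 : a ^ N ≤ T := by
    rw [hT, ← hpow a]
    exact Finset.prod_le_prod (fun k _ => le_of_lt ha) (fun k _ => ht1 k)
  have hT2 : T ≤ b ^ N := by
    rw [hT, ← hpow b]
    exact Finset.prod_le_prod (fun k _ => le_of_lt (ht0 k)) (fun k _ => ht2 k)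
  have hM1 : a ^ N ≤ M := by
    rw [hM, ← hpow a]
    exact Finset.prod_le_prod (fun k _ => le_of_lt ha) (fun k _ => hm1 k)
  have hM2 : M ≤ b ^ N := by
    rw [hM, ← hpow b]
    exact Finset.prod_le_prod (fun k _ => le_of_lt (hm0 k)) (fun k _ =>
      le_trans (hms k) (hs2 k))
  -- key product identities
  have hCS : C * S = M := by
    rw [hC, hS, hM, ← Finset.prod_mul_distrib]
    exact Finset.prod_congr rfl fun k _ => div_mul_cancel₀ _ (ne_of_gt (hs0 k))
  have hDT : D * T = M := by
    rw [hD, hT, hM, ← Finset.prod_mul_distrib]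
    exact Finset.prod_congr rfl fun k _ => div_mul_cancel₀ _ (ne_of_gt (ht0 k))
  -- bounds relating 1 - C to Q and 1 - D to P
  have hCQ1 : a * (1 - C) ≤ Q := by
    have h1 : 1 - C ≤ ∑ k, (1 - m k / s k) := aux_one_sub_prod_le_sum _ hws0 hws1
    have h2 : ∑ k, (1 - m k / s k) ≤ ∑ k, (s k - m k) / a := by
      refine Finset.sum_le_sum fun k _ => ?_
      rw [show (1 : ℝ) - m k / s k = (s k - m k) / s k by
        rw [sub_div, div_self (ne_of_gt (hs0 k))]]
      gcongr
      · linarith [hms k]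
      · exact hs1 k
    have h3 : (1 : ℝ) - C ≤ Q / a := by
      rw [hQ, Finset.sum_div]; exact h1.trans h2
    rw [mul_comm]; exact (le_div_iff₀ ha).mp h3
  have hCQ2 : Q ≤ (N * b) * (1 - C) := by
    have h1 : ∑ k, (1 - m k / s k) ≤ N * (1 - C) := aux_sum_le N _ hws0 hws1
    have h2 : ∑ k, (s k - m k) / b ≤ ∑ k, (1 - m k / s k) := by
      refine Finset.sum_le_sum fun k _ => ?_
      rw [show (1 : ℝ) - m k / s k = (s k - m k) / s k by
        rw [sub_div, div_self (ne_of_gt (hs0 k))]]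
      gcongr
      · linarith [hms k]
      · exact hs0 k
      · exact hs2 k
    have h3 : Q / b ≤ N * (1 - C) := by
      rw [hQ, Finset.sum_div]; exact h2.trans h1
    rw [div_le_iff₀ hb] at h3; linarith
  have hDP1 : a * (1 - D) ≤ P := by
    have h1 : 1 - D ≤ ∑ k, (1 - m k / t k) := aux_one_sub_prod_le_sum _ hwt0 hwt1
    have h2 : ∑ k, (1 - m k / t k) ≤ ∑ k, (t k - m k) / a := by
      refine Finset.sum_le_sum fun k _ => ?_
      rw [show (1 : ℝ) - m k / t k = (t k - m k) / t k by
        rw [sub_div, div_self (ne_of_gt (ht0 k))]]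
      gcongr
      · linarith [hmt k]
      · exact ht1 k
    have h3 : (1 : ℝ) - D ≤ P / a := by
      rw [hP, Finset.sum_div]; exact h1.trans h2
    rw [mul_comm]; exact (le_div_iff₀ ha).mp h3
  have hDP2 : P ≤ (N * b) * (1 - D) := by
    have h1 : ∑ k, (1 - m k / t k) ≤ N * (1 - D) := aux_sum_le N _ hwt0 hwt1
    have h2 : ∑ k, (t k - m k) / b ≤ ∑ k, (1 - m k / t k) := by
      refine Finset.sum_le_sum fun k _ => ?_
      rw [show (1 : ℝ) - m k / t k = (t k - m k) / t k by
        rw [sub_div, div_self (ne_of_gt (ht0 k))]]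
      gcongr
      · linarith [hmt k]
      · exact ht0 k
      · exact ht2 k
    have h3 : P / b ≤ N * (1 - D) := by
      rw [hP, Finset.sum_div]; exact h2.trans h1
    rw [div_le_iff₀ hb] at h3; linarith
  -- P + Q = R
  have hPQ : P + Q = R := by
    rw [hP, hQ, hR, ← Finset.sum_add_distrib]
    refine Finset.sum_congr rfl fun k _ => ?_
    rcases le_total (s k) (t k) with h | h
    · rw [hm]; simp only [min_eq_left h]
      rw [abs_of_nonneg (by linarith)]; ring
    · rw [hm]; simp only [min_eq_right h]
      rw [abs_of_nonpos (by linarith)]; ring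
  -- norm facts
  have happ : ∀ k, (t - s) k = t k - s k := fun k => rfl
  have hRn1 : n ≤ R := by
    rw [hn, hR]
    calc ‖t - s‖ ≤ ∑ k, |(t - s) k| := aux_norm_le_sum _
      _ = ∑ k, |t k - s k| := by simp [happ]
  have hRn2 : R ≤ N * n := by
    rw [hR, hn]
    calc ∑ k, |t k - s k| = ∑ k, |(t - s) k| := by simp [happ]
      _ ≤ Finset.univ.card • ‖t - s‖ := Finset.sum_le_card_nsmul _ _ _
          (fun k _ => aux_abs_le_norm _ k)
      _ = N * ‖t - s‖ := by simp [nsmul_eq_mul]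
  have hn0 : 0 ≤ n := norm_nonneg _
  have hnbd : n ≤ N * (b - a) := by
    refine hRn1.trans ?_
    rw [hR]
    calc ∑ k, |t k - s k| ≤ Finset.univ.card • (b - a) :=
          Finset.sum_le_card_nsmul _ _ _ (fun k _ =>
            abs_le.mpr ⟨by linarith [ht1 k, hs2 k], by linarith [ht2 k, hs1 k]⟩)
      _ = N * (b - a) := by simp [nsmul_eq_mul]
  -- variance identity
  have hkey : T - C ^ 2 * S = T * (1 - D) + M * (1 - C) := by
    have h1 : C ^ 2 * S = C * M := by rw [sq, mul_assoc, hCS]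
    linear_combination hDT - h1
  clear_value m C D T S M P Q R n
  refine ⟨?_, ?_, ?_⟩
  · -- (i)
    have h1 : 1 - C ≤ (N / a) * n := by
      have : a * (1 - C) ≤ N * n := by
        calc a * (1 - C) ≤ Q := hCQ1
          _ ≤ P + Q := by linarith
          _ = R := hPQ
          _ ≤ N * n := hRn2
      rw [div_mul_eq_mul_div, le_div_iff₀ ha]; linarith
    have h2 : n ≤ Real.sqrt (N * (b - a)) * Real.sqrt n := by
      conv_lhs => rw [← Real.mul_self_sqrt hn0]
      exact mul_le_mul_of_nonneg_right (Real.sqrt_le_sqrt hnbd) (Real.sqrt_nonneg _)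
    calc 1 - C ≤ (N / a) * n := h1
      _ ≤ (N / a) * (Real.sqrt (N * (b - a)) * Real.sqrt n) :=
          mul_le_mul_of_nonneg_left h2 (le_of_lt (div_pos hN0 ha))
      _ = (N / a) * Real.sqrt (N * (b - a)) * Real.sqrt n := by ring
  · -- lower bound
    have hd0 : (0:ℝ) ≤ 1 - D := by linarith
    have hc0 : (0:ℝ) ≤ 1 - C := by linarith
    have hNb : (0:ℝ) < N * b := mul_pos hN0 hb
    have lowD : a ^ N * P ≤ (N * b) * (T * (1 - D)) := by
      calc a ^ N * P ≤ a ^ N * ((N * b) * (1 - D)) :=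
            mul_le_mul_of_nonneg_left hDP2 haN.le
        _ = (N * b) * (a ^ N * (1 - D)) := by ring
        _ ≤ (N * b) * (T * (1 - D)) :=
            mul_le_mul_of_nonneg_left (mul_le_mul_of_nonneg_right hT1 hd0) hNb.le
    have lowC : a ^ N * Q ≤ (N * b) * (M * (1 - C)) := by
      calc a ^ N * Q ≤ a ^ N * ((N * b) * (1 - C)) :=
            mul_le_mul_of_nonneg_left hCQ2 haN.le
        _ = (N * b) * (a ^ N * (1 - C)) := by ring
        _ ≤ (N * b) * (M * (1 - C)) :=
            mul_le_mul_of_nonneg_left (mul_le_mul_of_nonneg_right hM1 hc0) hNb.le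
    have hmain : a ^ N * R ≤ (N * b) * (T - C ^ 2 * S) := by
      rw [hkey, ← hPQ, mul_add, mul_add]
      exact add_le_add lowD lowC
    calc min (a^N/(N*b)) (1/2) * n ≤ (a^N/(N*b)) * n :=
          mul_le_mul_of_nonneg_right (min_le_left _ _) hn0
      _ ≤ T - C ^ 2 * S := by
          rw [div_mul_eq_mul_div, div_le_iff₀ hNb]
          calc a ^ N * n ≤ a ^ N * R := mul_le_mul_of_nonneg_left hRn1 haN.le
            _ ≤ (N * b) * (T - C ^ 2 * S) := hmain
            _ = (T - C ^ 2 * S) * (N * b) := mul_comm _ _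
  · -- upper bound
    have hT0 : (0:ℝ) ≤ T := le_trans haN.le hT1
    have hM0 : (0:ℝ) ≤ M := le_trans haN.le hM1
    have upD : a * (T * (1 - D)) ≤ b ^ N * P := by
      calc a * (T * (1 - D)) = T * (a * (1 - D)) := by ring
        _ ≤ T * P := mul_le_mul_of_nonneg_left hDP1 hT0
        _ ≤ b ^ N * P := mul_le_mul_of_nonneg_right hT2 hP0
    have upC : a * (M * (1 - C)) ≤ b ^ N * Q := by
      calc a * (M * (1 - C)) = M * (a * (1 - C)) := by ring
        _ ≤ M * Q := mul_le_mul_of_nonneg_left hCQ1 hM0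
        _ ≤ b ^ N * Q := mul_le_mul_of_nonneg_right hM2 hQ0
    have hmain : a * (T - C ^ 2 * S) ≤ b ^ N * R := by
      rw [hkey, ← hPQ, mul_add, mul_add]
      exact add_le_add upD upC
    have h1 : T - C ^ 2 * S ≤ (N * b ^ N / a) * n := by
      rw [div_mul_eq_mul_div, le_div_iff₀ ha]
      calc (T - C ^ 2 * S) * a = a * (T - C ^ 2 * S) := mul_comm _ _
        _ ≤ b ^ N * R := hmain
        _ ≤ b ^ N * (N * n) := mul_le_mul_of_nonneg_left hRn2 hbN.le
        _ = N * b ^ N * n := by ring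
    linarith [mul_nonneg (by norm_num : (0:ℝ) ≤ 2) hn0]
end
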